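/- Let μ > 0, g(X) = -X^3 + 3μ^2 X, and fix b₁ ∈ [0, 1/μ²) with b₁ ≠ 1/(9μ²). For every r ≥ 1 there exists a unique b₂ ∈ [0, 2μ - 2 b₁ μ^3) such that T₋⁰(b₁,b₂)/T₊⁰(b₁,b₂) = r, where T₋⁰ and T₊⁰ are as defined (and both positive on this range of b₂). -/

import Mathlib

/-!
Put `T c := ∫_{-2μ}^{-μ} g'(X) / (X + b₁ g(X) + c) dX`. Since `g'` is even and `g` is odd, the
substitution `X ↦ -X` gives `T₊⁰(b₁, b₂) = T (-b₂)`, so the ratio is `T b₂ / T (-b₂)`. While the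
denominator is negative, `g' < 0` makes `T` positive, continuous and strictly increasing, so the
ratio is continuous, strictly increasing and equal to `1` at `b₂ = 0`. With `s = 2μ - 2b₁μ³`,
`X + b₁ g(X) + s = (X + 2μ)(1 - b₁(X - μ)²)` vanishes at `X = -2μ`; comparing the integrand near
`-2μ` with `3μ² / (s - b₂ + 8(X + 2μ))` gives `T b₂ ≥ (3μ²/8) log (1 + 4μ/(s - b₂)) → ∞`, while
`T (-b₂) ≤ T 0`. The intermediate value theorem now gives existence, monotonicity uniqueness.
-/

open Set Filter Topology MeasureTheory intervalIntegral Interval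

theorem existsUnique_eq_of_strictMonoOn_of_tendsto_atTop {f : ℝ → ℝ} {a b r : ℝ} (hab : a < b)
    (hf : ContinuousOn f (Ico a b)) (hmono : StrictMonoOn f (Ico a b))
    (htop : Tendsto f (𝓝[<] b) atTop) (hr : f a ≤ r) :
    ∃! x, x ∈ Ico a b ∧ f x = r := by
  have : NeBot (𝓝[Ico a b] b) := by rw [nhdsWithin_Ico_eq_nhdsLT hab]; infer_instance
  obtain ⟨x, hx, rfl⟩ := isPreconnected_Ico.intermediate_value_Ici (l := 𝓝[Ico a b] b)
    (left_mem_Ico.2 hab) inf_le_right hf (by rwa [nhdsWithin_Ico_eq_nhdsLT hab]) hr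
  exact ⟨x, ⟨hx, rfl⟩, fun y hy => hmono.injOn hy.1 hx hy.2⟩

theorem continuousAt_intervalIntegral_of_continuousAt_uncurry {P : Type*} [TopologicalSpace P]
    [FirstCountableTopology P] {F : P → ℝ → ℝ} {p₀ : P} {a b : ℝ}
    (hF_meas : ∀ᶠ p in 𝓝 p₀, AEStronglyMeasurable (F p) (volume.restrict (Ι a b)))
    (hF : ∀ t ∈ [[a, b]], ContinuousAt (Function.uncurry F) (p₀, t)) :
    ContinuousAt (fun p => ∫ t in a..b, F p t) p₀ := by
  have hF₀ : ∀ t ∈ [[a, b]], ContinuousAt (F p₀) t := fun t ht =>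
    (hF t ht).comp (f := fun s => (p₀, s)) (continuousAt_const.prodMk continuousAt_id)
  have hbound : ∀ᶠ p in 𝓝 p₀, ∀ t ∈ [[a, b]], ‖F p t‖ < ‖F p₀ t‖ + 1 :=
    isCompact_uIcc.eventually_forall_of_forall_eventually fun t ht =>
      (hF t ht).norm.eventually_lt
        (((hF₀ t ht).norm.add continuousAt_const).comp (g := fun s => ‖F p₀ s‖ + 1)
          continuousAt_snd) (lt_add_one _)
  refine continuousAt_of_dominated_interval (bound := fun t => ‖F p₀ t‖ + 1) hF_meas ?_ ?_ ?_
  · filter_upwards [hbound] with p hp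
    exact ae_of_all _ fun t ht => (hp t (uIoc_subset_uIcc ht)).le
  · exact ContinuousOn.intervalIntegrable fun t ht =>
      ((hF₀ t ht).norm.add continuousAt_const).continuousWithinAt
  · exact ae_of_all _ fun t ht =>
      (hF t (uIoc_subset_uIcc ht)).comp (f := fun p => (p, t))
        (continuousAt_id.prodMk continuousAt_const)

theorem continuousOn_intervalIntegral_div_add {n d : ℝ → ℝ} {a b : ℝ} {S : Set ℝ}
    (hn : Continuous n) (hd : Continuous d) (hS : ∀ c ∈ S, ∀ X ∈ [[a, b]], d X + c ≠ 0) :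
    ContinuousOn (fun c => ∫ X in a..b, n X / (d X + c)) S := fun c hc =>
  (continuousAt_intervalIntegral_of_continuousAt_uncurry
    (Eventually.of_forall fun c =>
      (hn.measurable.div (hd.measurable.add_const c)).aestronglyMeasurable)
    fun X hX => ((hn.comp continuous_snd).continuousAt).div
      ((hd.comp continuous_snd).add continuous_fst).continuousAt (hS c hc X hX)).continuousWithinAt

theorem div_le_div_of_nonpos_of_mul_pos {n x y : ℝ} (hn : n ≤ 0) (hxy : x ≤ y) (hpos : 0 < x * y) :
    n / x ≤ n / y := by
  have hx : x ≠ 0 := left_ne_zero_of_mul hpos.ne'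
  have hy : y ≠ 0 := right_ne_zero_of_mul hpos.ne'
  have key : n / y - n / x = n * (x - y) / (x * y) := by field_simp
  linarith [div_nonneg (mul_nonneg_of_nonpos_of_nonpos hn (sub_nonpos.2 hxy)) hpos.le]

theorem div_lt_div_of_neg_of_mul_pos {n x y : ℝ} (hn : n < 0) (hxy : x < y) (hpos : 0 < x * y) :
    n / x < n / y := by
  have hx : x ≠ 0 := left_ne_zero_of_mul hpos.ne'
  have hy : y ≠ 0 := right_ne_zero_of_mul hpos.ne'
  have key : n / y - n / x = n * (x - y) / (x * y) := by field_simp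
  linarith [div_pos (mul_pos_of_neg_of_neg hn (sub_neg.2 hxy)) hpos]

theorem intervalIntegral_div_add_lt_of_lt {n d : ℝ → ℝ} {a b c₁ c₂ : ℝ} (hab : a < b)
    (hn : Continuous n) (hd : Continuous d) (hn_nonpos : ∀ X ∈ Icc a b, n X ≤ 0)
    (hn_neg : ∃ X ∈ Icc a b, n X < 0) (hsign : ∀ X ∈ Icc a b, 0 < (d X + c₁) * (d X + c₂))
    (hc : c₁ < c₂) :
    ∫ X in a..b, n X / (d X + c₁) < ∫ X in a..b, n X / (d X + c₂) := by
  have hcont : ∀ c, (∀ X ∈ Icc a b, d X + c ≠ 0) →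
      ContinuousOn (fun X => n X / (d X + c)) (Icc a b) := fun c hc =>
    hn.continuousOn.div (hd.add continuous_const).continuousOn hc
  refine integral_lt_integral_of_continuousOn_of_le_of_exists_lt hab
    (hcont c₁ fun X hX => left_ne_zero_of_mul (hsign X hX).ne')
    (hcont c₂ fun X hX => right_ne_zero_of_mul (hsign X hX).ne')
    (fun X hX => div_le_div_of_nonpos_of_mul_pos (hn_nonpos X (Ioc_subset_Icc_self hX))
      (by linarith) (hsign X (Ioc_subset_Icc_self hX))) ?_
  obtain ⟨X, hX, hnX⟩ := hn_neg
  exact ⟨X, hX, div_lt_div_of_neg_of_mul_pos hnX (by linarith) (hsign X hX)⟩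

theorem integral_div_mul_add {C K e a b : ℝ} (hK : K ≠ 0) (ha : 0 < K * a + e)
    (hb : 0 < K * b + e) :
    ∫ X in a..b, C / (K * X + e) = C / K * Real.log ((K * b + e) / (K * a + e)) := by
  rw [integral_comp_mul_add (fun u => C / u) hK]
  simp only [div_eq_mul_inv C, intervalIntegral.integral_const_mul, integral_inv_of_pos ha hb,
    smul_eq_mul]
  ring

theorem tendsto_log_add_div_self_nhdsGT_zero {k : ℝ} (hk : 0 < k) :
    Tendsto (fun ε => Real.log ((k + ε) / ε)) (𝓝[>] 0) atTop := by
  have h : Tendsto (fun ε => k * ε⁻¹ + 1) (𝓝[>] 0) atTop :=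
    tendsto_atTop_add_const_right _ 1 (tendsto_inv_nhdsGT_zero.const_mul_atTop hk)
  refine (Real.tendsto_log_atTop.comp h).congr' ?_
  filter_upwards [self_mem_nhdsWithin] with ε (hε : 0 < ε)
  rw [Function.comp_apply, add_div, div_self hε.ne', div_eq_mul_inv]

theorem tendsto_sub_nhdsLT (s : ℝ) : Tendsto (fun c => s - c) (𝓝[<] s) (𝓝[>] 0) :=
  tendsto_nhdsWithin_iff.2 ⟨((continuous_sub_left s).tendsto' s 0 (sub_self s)).mono_left
    nhdsWithin_le_nhds, eventually_nhdsWithin_of_forall fun _ hc => mem_Ioi.2 (sub_pos.2 hc)⟩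

namespace DurationRatio

def cubic (μ X : ℝ) : ℝ := -X^3 + 3*μ^2*X

/-- `T₋⁰(b₁, b₂)` and `T₊⁰(b₁, b₂)` for `g = cubic μ`. -/
noncomputable def durationNeg (μ b₁ b₂ : ℝ) : ℝ :=
  ∫ X in (-2*μ)..(-μ), deriv (cubic μ) X / (X + b₁ * cubic μ X + b₂)

noncomputable def durationPos (μ b₁ b₂ : ℝ) : ℝ :=
  ∫ X in (2*μ)..μ, deriv (cubic μ) X / (X + b₁ * cubic μ X + b₂)

noncomputable def durationRatio (μ b₁ b₂ : ℝ) : ℝ := durationNeg μ b₁ b₂ / durationPos μ b₁ b₂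

def denomNegSet (μ b₁ : ℝ) : Set ℝ := {c | ∀ X ∈ Icc (-2*μ) (-μ), X + b₁ * cubic μ X + c < 0}

variable {μ b₁ : ℝ}

theorem deriv_cubic (μ : ℝ) : deriv (cubic μ) = fun X => 3*μ^2 - 3*X^2 := by
  funext X
  have h : HasDerivAt (cubic μ) (-(↑3 * X ^ (3 - 1)) + 3*μ^2 * 1) X :=
    (hasDerivAt_pow 3 X).neg.add ((hasDerivAt_id X).const_mul (3*μ^2))
  rw [h.deriv]; norm_num; ring

theorem cubic_neg (μ X : ℝ) : cubic μ (-X) = -cubic μ X := by unfold cubic; ring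

theorem deriv_cubic_nonpos (hμ : 0 ≤ μ) {X : ℝ} (hX : X ≤ -μ) : deriv (cubic μ) X ≤ 0 := by
  rw [deriv_cubic]; nlinarith

theorem deriv_cubic_neg (hμ : 0 ≤ μ) {X : ℝ} (hX : X < -μ) : deriv (cubic μ) X < 0 := by
  rw [deriv_cubic]; nlinarith

theorem continuous_deriv_cubic (μ : ℝ) : Continuous (deriv (cubic μ)) := by
  rw [deriv_cubic]; fun_prop

theorem continuous_add_mul_cubic (μ b₁ : ℝ) : Continuous fun X => X + b₁ * cubic μ X := by
  unfold cubic; fun_prop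

theorem add_mul_cubic_add_eq (μ b₁ X : ℝ) :
    X + b₁ * cubic μ X + (2*μ - 2*b₁*μ^3) = (X + 2*μ) * (1 - b₁ * (X - μ)^2) := by
  unfold cubic; ring

theorem mem_denomNegSet_of_le {c c' : ℝ} (hc : c ∈ denomNegSet μ b₁) (hc' : c' ≤ c) :
    c' ∈ denomNegSet μ b₁ := fun X hX => by linarith [hc X hX]

theorem Iio_subset_denomNegSet (hs : 0 < 2*μ - 2*b₁*μ^3)
    (hneg : Ico 0 (2*μ - 2*b₁*μ^3) ⊆ denomNegSet μ b₁) :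
    Iio (2*μ - 2*b₁*μ^3) ⊆ denomNegSet μ b₁ := fun c hc =>
  mem_denomNegSet_of_le (hneg ⟨le_max_right c 0, max_lt hc hs⟩) (le_max_left c 0)

-- `g'` is even and `X + b₁ g(X)` is odd, so `X ↦ -X` turns `T₊⁰` into `T₋⁰` with `b₂` negated.
theorem durationPos_eq_durationNeg_neg (μ b₁ b₂ : ℝ) :
    durationPos μ b₁ b₂ = durationNeg μ b₁ (-b₂) := by
  have hodd : ∀ X, deriv (cubic μ) X / (X + b₁ * cubic μ X + -b₂)
      = -(deriv (cubic μ) (-X) / (-X + b₁ * cubic μ (-X) + b₂)) := fun X => by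
    rw [cubic_neg, deriv_cubic, ← div_neg]; ring_nf
  rw [durationPos, durationNeg, integral_congr fun X _ => hodd X, intervalIntegral.integral_neg,
    integral_comp_neg (fun X => deriv (cubic μ) X / (X + b₁ * cubic μ X + b₂)), integral_symm,
    neg_mul, neg_neg, neg_neg]

theorem continuousOn_durationNeg (hμ : 0 ≤ μ) :
    ContinuousOn (durationNeg μ b₁) (denomNegSet μ b₁) :=
  continuousOn_intervalIntegral_div_add (continuous_deriv_cubic μ) (continuous_add_mul_cubic μ b₁)
    fun c hc X hX => (hc X (by rwa [uIcc_of_le (by linarith)] at hX)).ne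

theorem intervalIntegrable_durationNeg_integrand (hμ : 0 ≤ μ) {c : ℝ}
    (hc : c ∈ denomNegSet μ b₁) :
    IntervalIntegrable (fun X => deriv (cubic μ) X / (X + b₁ * cubic μ X + c))
      volume (-2*μ) (-μ) :=
  ((continuous_deriv_cubic μ).continuousOn.div
    ((continuous_add_mul_cubic μ b₁).add continuous_const).continuousOn
    fun X hX => (hc X hX).ne).intervalIntegrable_of_Icc (by linarith)

theorem durationNeg_pos (hμ : 0 < μ) {c : ℝ} (hc : c ∈ denomNegSet μ b₁) :
    0 < durationNeg μ b₁ c := by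
  refine intervalIntegral_pos_of_pos_on (intervalIntegrable_durationNeg_integrand hμ.le hc)
    (fun X hX => ?_) (by linarith)
  exact div_pos_of_neg_of_neg (deriv_cubic_neg hμ.le hX.2) (hc X (Ioo_subset_Icc_self hX))

theorem strictMonoOn_durationNeg (hμ : 0 < μ) :
    StrictMonoOn (durationNeg μ b₁) (denomNegSet μ b₁) :=
  fun c₁ h₁ c₂ h₂ hc => intervalIntegral_div_add_lt_of_lt (by linarith) (continuous_deriv_cubic μ)
    (continuous_add_mul_cubic μ b₁) (fun X hX => deriv_cubic_nonpos hμ.le hX.2)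
    ⟨-2*μ, left_mem_Icc.2 (by linarith), deriv_cubic_neg hμ.le (by linarith)⟩
    (fun X hX => mul_pos_of_neg_of_neg (h₁ X hX) (h₂ X hX)) hc

theorem div_le_durationNeg_integrand (hμ : 0 < μ) (hb₁ : b₁ < 1/μ^2) {c X : ℝ}
    (hX : X ∈ Icc (-2*μ) (-(3*μ/2))) (hden : X + b₁ * cubic μ X + c < 0) :
    3*μ^2 / (8*X + (16*μ + (2*μ - 2*b₁*μ^3 - c)))
      ≤ deriv (cubic μ) X / (X + b₁ * cubic μ X + c) := by
  obtain ⟨hX₁, hX₂⟩ := hX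
  have hb₁X : b₁ * (X - μ)^2 ≤ 9 :=
    calc b₁ * (X - μ)^2 ≤ 1/μ^2 * (X - μ)^2 := mul_le_mul_of_nonneg_right hb₁.le (sq_nonneg _)
      _ ≤ 9 := by rw [one_div_mul_eq_div, div_le_iff₀ (by positivity)]; nlinarith
  have hden_le : -(X + b₁ * cubic μ X + c) ≤ 8*X + (16*μ + (2*μ - 2*b₁*μ^3 - c)) := by
    nlinarith [add_mul_cubic_add_eq μ b₁ X,
      mul_le_mul_of_nonneg_left (show -8 ≤ 1 - b₁ * (X - μ)^2 by linarith)
        (show 0 ≤ X + 2*μ by linarith)]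
  have hnum : 3*μ^2 ≤ -deriv (cubic μ) X := by rw [deriv_cubic]; nlinarith
  rw [← neg_div_neg_eq (deriv (cubic μ) X)]
  exact div_le_div₀ ((by positivity : (0:ℝ) ≤ 3*μ^2).trans hnum) hnum (by linarith) hden_le

theorem log_le_durationNeg (hμ : 0 < μ) (hb₁ : b₁ < 1/μ^2) {c : ℝ} (hc : c ∈ denomNegSet μ b₁)
    (hcs : c < 2*μ - 2*b₁*μ^3) :
    3*μ^2/8 * Real.log ((4*μ + (2*μ - 2*b₁*μ^3 - c)) / (2*μ - 2*b₁*μ^3 - c))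
      ≤ durationNeg μ b₁ c := by
  set ε := 2*μ - 2*b₁*μ^3 - c
  have hε : 0 < ε := sub_pos.2 hcs
  have hint := intervalIntegrable_durationNeg_integrand hμ.le hc
  have hsplit : Icc (-2*μ) (-(3*μ/2)) ⊆ Icc (-2*μ) (-μ) ∧ Icc (-(3*μ/2)) (-μ) ⊆ Icc (-2*μ) (-μ) :=
    ⟨Icc_subset_Icc_right (by linarith), Icc_subset_Icc_left (by linarith)⟩
  have hlog : 3*μ^2/8 * Real.log ((4*μ + ε) / ε)
      = ∫ X in (-2*μ)..(-(3*μ/2)), 3*μ^2 / (8*X + (16*μ + ε)) := by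
    rw [integral_div_mul_add (by norm_num) (by linarith) (by linarith)]
    ring_nf
  have hleft : ∫ X in (-2*μ)..(-(3*μ/2)), 3*μ^2 / (8*X + (16*μ + ε))
      ≤ ∫ X in (-2*μ)..(-(3*μ/2)), deriv (cubic μ) X / (X + b₁ * cubic μ X + c) := by
    refine integral_mono_on (by linarith) ?_ ?_
      fun X hX => div_le_durationNeg_integrand hμ hb₁ hX (hc X (hsplit.1 hX))
    · refine ContinuousOn.intervalIntegrable_of_Icc (by linarith) ?_
      exact continuousOn_const.div (by fun_prop) fun X hX => by linarith [hX.1]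
    · exact hint.mono_set
        (by rw [uIcc_of_le (by linarith), uIcc_of_le (by linarith)]; exact hsplit.1)
  have hright : 0 ≤ ∫ X in (-(3*μ/2))..(-μ), deriv (cubic μ) X / (X + b₁ * cubic μ X + c) :=
    integral_nonneg (by linarith) fun X hX =>
      div_nonneg_of_nonpos (deriv_cubic_nonpos hμ.le hX.2) (hc X (hsplit.2 hX)).le
  rw [durationNeg, ← integral_add_adjacent_intervals (b := -(3*μ/2))
    (hint.mono_set (by rw [uIcc_of_le (by linarith), uIcc_of_le (by linarith)]; exact hsplit.1))
    (hint.mono_set (by rw [uIcc_of_le (by linarith), uIcc_of_le (by linarith)]; exact hsplit.2))]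
  linarith

theorem tendsto_durationNeg_atTop (hμ : 0 < μ) (hb₁ : b₁ < 1/μ^2)
    (hA : Iio (2*μ - 2*b₁*μ^3) ⊆ denomNegSet μ b₁) :
    Tendsto (durationNeg μ b₁) (𝓝[<] (2*μ - 2*b₁*μ^3)) atTop := by
  have hlog := ((tendsto_log_add_div_self_nhdsGT_zero (by positivity : 0 < 4*μ)).comp
    (tendsto_sub_nhdsLT (2*μ - 2*b₁*μ^3))).const_mul_atTop (by positivity : 0 < 3*μ^2/8)
  refine tendsto_atTop_mono' _ ?_ hlog
  filter_upwards [self_mem_nhdsWithin] with c hc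
  exact log_le_durationNeg hμ hb₁ (hA hc) hc

theorem durationRatio_eq (μ b₁ : ℝ) :
    durationRatio μ b₁ = fun b => durationNeg μ b₁ b / durationNeg μ b₁ (-b) := by
  funext b
  rw [durationRatio, durationPos_eq_durationNeg_neg]

theorem durationRatio_zero (hμ : 0 < μ) (h0 : 0 ∈ denomNegSet μ b₁) :
    durationRatio μ b₁ 0 = 1 := by
  rw [durationRatio, durationPos_eq_durationNeg_neg, neg_zero, div_self (durationNeg_pos hμ h0).ne']

theorem neg_mem_denomNegSet {b : ℝ} (hA : Iio (2*μ - 2*b₁*μ^3) ⊆ denomNegSet μ b₁)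
    (hb : b ∈ Ico 0 (2*μ - 2*b₁*μ^3)) : -b ∈ denomNegSet μ b₁ :=
  mem_denomNegSet_of_le (hA hb.2) (by linarith [hb.1])

theorem continuousOn_durationRatio (hμ : 0 < μ) (hA : Iio (2*μ - 2*b₁*μ^3) ⊆ denomNegSet μ b₁) :
    ContinuousOn (durationRatio μ b₁) (Ico 0 (2*μ - 2*b₁*μ^3)) := by
  rw [durationRatio_eq]
  exact ((continuousOn_durationNeg hμ.le).mono fun b hb => hA hb.2).div
    ((continuousOn_durationNeg hμ.le).comp continuousOn_neg fun b hb => neg_mem_denomNegSet hA hb)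
    fun b hb => (durationNeg_pos hμ (neg_mem_denomNegSet hA hb)).ne'

theorem strictMonoOn_durationRatio (hμ : 0 < μ) (hA : Iio (2*μ - 2*b₁*μ^3) ⊆ denomNegSet μ b₁) :
    StrictMonoOn (durationRatio μ b₁) (Ico 0 (2*μ - 2*b₁*μ^3)) := by
  intro a ha b hb hab
  rw [durationRatio_eq]
  have hmono := strictMonoOn_durationNeg (b₁ := b₁) hμ
  exact div_lt_div₀ (hmono (hA ha.2) (hA hb.2) hab)
    (hmono (neg_mem_denomNegSet hA hb) (neg_mem_denomNegSet hA ha) (neg_lt_neg hab)).le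
    (durationNeg_pos hμ (hA hb.2)).le (durationNeg_pos hμ (neg_mem_denomNegSet hA hb))

theorem tendsto_durationRatio_atTop (hμ : 0 < μ) (hb₁ : b₁ < 1/μ^2) (hs : 0 < 2*μ - 2*b₁*μ^3)
    (hA : Iio (2*μ - 2*b₁*μ^3) ⊆ denomNegSet μ b₁) :
    Tendsto (durationRatio μ b₁) (𝓝[<] (2*μ - 2*b₁*μ^3)) atTop := by
  have hT0 := durationNeg_pos hμ (hA hs)
  refine tendsto_atTop_mono' _ ?_
    ((tendsto_durationNeg_atTop hμ hb₁ hA).atTop_div_const hT0)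
  filter_upwards [Ico_mem_nhdsLT hs] with b hb
  rw [durationRatio_eq]
  have hneg_le : durationNeg μ b₁ (-b) ≤ durationNeg μ b₁ 0 :=
    (strictMonoOn_durationNeg hμ).monotoneOn (neg_mem_denomNegSet hA hb) (hA hs)
      (by linarith [hb.1])
  exact div_le_div_of_nonneg_left (durationNeg_pos hμ (hA hb.2)).le
    (durationNeg_pos hμ (neg_mem_denomNegSet hA hb)) hneg_le

end DurationRatio

theorem exists_unique_b2_for_duration_ratio_general (μ b₁ : ℝ) (hμ : 0 < μ)
    (hb₁1 : b₁ < 1/μ^2)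
    (g : ℝ → ℝ) (hg : ∀ X, g X = -X^3 + 3*μ^2*X)
    (hneg : ∀ b₂ ∈ Set.Ico (0:ℝ) (2*μ - 2*b₁*μ^3), ∀ X ∈ Set.Icc (-2*μ) (-μ),
      X + b₁ * g X + b₂ < 0) :
    ∀ r : ℝ, 1 ≤ r →
      ∃! b₂ : ℝ, b₂ ∈ Set.Ico (0:ℝ) (2*μ - 2*b₁*μ^3) ∧
        (∫ X in (-2*μ)..(-μ), deriv g X / (X + b₁ * g X + b₂)) /
          (∫ X in (2*μ)..μ, deriv g X / (X + b₁ * g X + b₂)) = r := by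
  intro r hr
  obtain rfl : g = DurationRatio.cubic μ := funext hg
  have hs : 0 < 2*μ - 2*b₁*μ^3 := by
    have : b₁ * μ^2 < 1 := by rwa [lt_div_iff₀ (by positivity)] at hb₁1
    nlinarith
  have hA := DurationRatio.Iio_subset_denomNegSet hs hneg
  exact existsUnique_eq_of_strictMonoOn_of_tendsto_atTop (f := DurationRatio.durationRatio μ b₁) hs
    (DurationRatio.continuousOn_durationRatio hμ hA)
    (DurationRatio.strictMonoOn_durationRatio hμ hA)
    (DurationRatio.tendsto_durationRatio_atTop hμ hb₁1 hs hA)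
    ((DurationRatio.durationRatio_zero hμ (hA hs)).trans_le hr)

theorem exists_unique_b2_for_duration_ratio (μ b₁ : ℝ) (hμ : 0 < μ)
    (hb₁0 : 0 ≤ b₁) (hb₁1 : b₁ < 1/μ^2) (hb₁9 : b₁ ≠ 1/(9*μ^2))
    (g : ℝ → ℝ) (hg : ∀ X, g X = -X^3 + 3*μ^2*X)
    (hneg : ∀ b₂ ∈ Set.Ico (0:ℝ) (2*μ - 2*b₁*μ^3), ∀ X ∈ Set.Icc (-2*μ) (-μ),
      X + b₁ * g X + b₂ < 0)
    (hpos : ∀ b₂ ∈ Set.Ico (0:ℝ) (2*μ - 2*b₁*μ^3), ∀ X ∈ Set.Icc μ (2*μ),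
      0 < X + b₁ * g X + b₂) :
    ∀ r : ℝ, 1 ≤ r →
      ∃! b₂ : ℝ, b₂ ∈ Set.Ico (0:ℝ) (2*μ - 2*b₁*μ^3) ∧
        (∫ X in (-2*μ)..(-μ), deriv g X / (X + b₁ * g X + b₂)) /
          (∫ X in (2*μ)..μ, deriv g X / (X + b₁ * g X + b₂)) = r :=
  exists_unique_b2_for_duration_ratio_general μ b₁ hμ hb₁1 g hg hneg
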